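/- The first-order logic with equality of each of the set theories IKP, IKP⁺ + MP + AC, CZF, and IZF is strictly stronger than intuitionistic first-order logic with equality: IQC^= ⊊ QL^=(T) for each such theory T. -/
import Mathlib


namespace IKP2007

/-! ## Syntax: formulas of the language `{∈, =}` of set theory (de Bruijn indices) -/

inductive SetF : Type where
  | mem : ℕ → ℕ → SetF
  | eq  : ℕ → ℕ → SetF
  | bot : SetF
  | and : SetF → SetF → SetF
  | or  : SetF → SetF → SetF
  | imp : SetF → SetF → SetF
  | ex  : SetF → SetF
  | all : SetF → SetF

namespace SetF

/-- Negation. -/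
def neg (φ : SetF) : SetF := .imp φ .bot

/-- Bi-implication. -/
def biimp (φ ψ : SetF) : SetF := .and (.imp φ ψ) (.imp ψ φ)

/-- Lift a variable renaming under one binder. -/
def liftR (f : ℕ → ℕ) : ℕ → ℕ
  | 0 => 0
  | n + 1 => f n + 1

/-- Apply a renaming to the free variables of a formula. -/
def rename (f : ℕ → ℕ) : SetF → SetF
  | mem i j => mem (f i) (f j)
  | eq i j  => eq (f i) (f j)
  | bot => bot
  | and φ ψ => and (rename f φ) (rename f ψ)
  | or φ ψ  => or (rename f φ) (rename f ψ)
  | imp φ ψ => imp (rename f φ) (rename f ψ)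
  | ex φ  => ex (rename (liftR f) φ)
  | all φ => all (rename (liftR f) φ)

/-- Shift all free variables up by one. -/
def shift (φ : SetF) : SetF := rename Nat.succ φ

/-- Instantiate the outermost bound variable (index 0) by the free variable `k`;
to be applied to the body of a quantifier. -/
def instVar (k : ℕ) (φ : SetF) : SetF :=
  rename (fun n => match n with | 0 => k | m + 1 => m) φ

/-- All free variables are `< n`. -/
def ClosedUnder : ℕ → SetF → Prop
  | n, mem i j => i < n ∧ j < n
  | n, eq i j  => i < n ∧ j < n
  | _, bot => True
  | n, and φ ψ => ClosedUnder n φ ∧ ClosedUnder n ψ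
  | n, or φ ψ  => ClosedUnder n φ ∧ ClosedUnder n ψ
  | n, imp φ ψ => ClosedUnder n φ ∧ ClosedUnder n ψ
  | n, ex φ  => ClosedUnder (n + 1) φ
  | n, all φ => ClosedUnder (n + 1) φ

/-- A sentence is a formula without free variables. -/
def Sentence (φ : SetF) : Prop := ClosedUnder 0 φ

/-- The variable `n` occurs freely in the formula. -/
def FreeIn : ℕ → SetF → Prop
  | n, mem i j => i = n ∨ j = n
  | n, eq i j  => i = n ∨ j = n
  | _, bot => False
  | n, and φ ψ => FreeIn n φ ∨ FreeIn n ψ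
  | n, or φ ψ  => FreeIn n φ ∨ FreeIn n ψ
  | n, imp φ ψ => FreeIn n φ ∨ FreeIn n ψ
  | n, ex φ  => FreeIn (n + 1) φ
  | n, all φ => FreeIn (n + 1) φ

end SetF

/-! ## The Δ₀-formulas and the Σ/Π-hierarchy -/

/-- Δ₀-formulas: all quantifiers are bounded. -/
inductive Delta0 : SetF → Prop where
  | mem (i j : ℕ) : Delta0 (SetF.mem i j)
  | eq (i j : ℕ) : Delta0 (SetF.eq i j)
  | bot : Delta0 SetF.bot
  | and {φ ψ} : Delta0 φ → Delta0 ψ → Delta0 (SetF.and φ ψ)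
  | or {φ ψ} : Delta0 φ → Delta0 ψ → Delta0 (SetF.or φ ψ)
  | imp {φ ψ} : Delta0 φ → Delta0 ψ → Delta0 (SetF.imp φ ψ)
  | ball {φ} (k : ℕ) : Delta0 φ → Delta0 (SetF.all (SetF.imp (SetF.mem 0 (k + 1)) φ))
  | bex {φ} (k : ℕ) : Delta0 φ → Delta0 (SetF.ex (SetF.and (SetF.mem 0 (k + 1)) φ))

mutual
  /-- The Σₙ-formulas of the Lévy hierarchy. -/
  inductive SigmaN : ℕ → SetF → Prop where
    | delta0 {n φ} : Delta0 φ → SigmaN n φ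
    | ofPi {n φ} : PiN n φ → SigmaN (n + 1) φ
    | ex {n φ} : SigmaN (n + 1) φ → SigmaN (n + 1) (SetF.ex φ)
  /-- The Πₙ-formulas of the Lévy hierarchy. -/
  inductive PiN : ℕ → SetF → Prop where
    | delta0 {n φ} : Delta0 φ → PiN n φ
    | ofSigma {n φ} : SigmaN n φ → PiN (n + 1) φ
    | all {n φ} : PiN (n + 1) φ → PiN (n + 1) (SetF.all φ)
end

/-- Σ₃-formulas. -/
def Sigma3 (φ : SetF) : Prop := SigmaN 3 φ

/-! ## Intuitionistic first-order provability (with equality) for the language `{∈,=}` -/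

/-- Natural deduction for intuitionistic first-order logic with equality over the
language of set theory.  `Prf Γ φ` means that `φ` is derivable from the set of
hypotheses `Γ`. -/
inductive Prf : Set SetF → SetF → Prop where
  | hyp {Γ φ} : φ ∈ Γ → Prf Γ φ
  | botE {Γ φ} : Prf Γ .bot → Prf Γ φ
  | andI {Γ φ ψ} : Prf Γ φ → Prf Γ ψ → Prf Γ (.and φ ψ)
  | andE₁ {Γ φ ψ} : Prf Γ (.and φ ψ) → Prf Γ φ
  | andE₂ {Γ φ ψ} : Prf Γ (.and φ ψ) → Prf Γ ψ
  | orI₁ {Γ φ ψ} : Prf Γ φ → Prf Γ (.or φ ψ)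
  | orI₂ {Γ φ ψ} : Prf Γ ψ → Prf Γ (.or φ ψ)
  | orE {Γ φ ψ χ} : Prf Γ (.or φ ψ) → Prf (insert φ Γ) χ → Prf (insert ψ Γ) χ → Prf Γ χ
  | impI {Γ φ ψ} : Prf (insert φ Γ) ψ → Prf Γ (.imp φ ψ)
  | impE {Γ φ ψ} : Prf Γ (.imp φ ψ) → Prf Γ φ → Prf Γ ψ
  | allI {Γ φ} : Prf (SetF.shift '' Γ) φ → Prf Γ (.all φ)
  | allE {Γ φ} (k : ℕ) : Prf Γ (.all φ) → Prf Γ (φ.instVar k)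
  | exI {Γ φ} (k : ℕ) : Prf Γ (φ.instVar k) → Prf Γ (.ex φ)
  | exE {Γ φ ψ} : Prf Γ (.ex φ) → Prf (insert φ (SetF.shift '' Γ)) ψ.shift → Prf Γ ψ
  | eqRefl {Γ} (i : ℕ) : Prf Γ (.eq i i)
  | eqSym {Γ i j} : Prf Γ (.eq i j) → Prf Γ (.eq j i)
  | eqTrans {Γ i j k} : Prf Γ (.eq i j) → Prf Γ (.eq j k) → Prf Γ (.eq i k)
  | eqMemL {Γ i j k} : Prf Γ (.eq i j) → Prf Γ (.mem i k) → Prf Γ (.mem j k)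
  | eqMemR {Γ i j k} : Prf Γ (.eq i j) → Prf Γ (.mem k i) → Prf Γ (.mem k j)

/-! ## The axioms of the set theories -/

namespace Axioms

/-- Extensionality: `∀a∀b(∀x(x∈a ↔ x∈b) → a=b)`. -/
def extensionality : SetF :=
  .all (.all (.imp (.all (SetF.biimp (.mem 0 2) (.mem 0 1))) (.eq 1 0)))

/-- Empty set: `∃a ∀x∈a ⊥`. -/
def emptySet : SetF := .ex (.all (.imp (.mem 0 1) .bot))

/-- Pairing: `∀a∀b∃y∀x(x∈y ↔ (x=a ∨ x=b))`. -/
def pairing : SetF :=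
  .all (.all (.ex (.all (SetF.biimp (.mem 0 1) (.or (.eq 0 3) (.eq 0 2))))))

/-- Union: `∀a∃y∀x(x∈y ↔ ∃u(u∈a ∧ x∈u))`. -/
def unionAx : SetF :=
  .all (.ex (.all (SetF.biimp (.mem 0 1) (.ex (.and (.mem 0 3) (.mem 1 0))))))

/-- Power set: `∀a∃y∀x(x∈y ↔ x ⊆ a)`. -/
def powerSet : SetF :=
  .all (.ex (.all (SetF.biimp (.mem 0 1) (.all (.imp (.mem 0 1) (.mem 0 3))))))

/-- `x_i` is empty. -/
def isEmptyV (i : ℕ) : SetF := .all (.imp (.mem 0 (i + 1)) .bot)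

/-- `x_i = x_j ∪ {x_j}` (a Δ₀-property). -/
def isSuccV (i j : ℕ) : SetF :=
  .and (.all (.imp (.mem 0 (i + 1)) (.or (.mem 0 (j + 1)) (.eq 0 (j + 1)))))
  (.and (.all (.imp (.mem 0 (j + 1)) (.mem 0 (i + 1)))) (.mem j i))

/-- `x_i = {∅}` (a Δ₀-property). -/
def isSingEmptyV (i : ℕ) : SetF :=
  .and (.all (.imp (.mem 0 (i + 1)) (isEmptyV 0)))
       (.ex (.and (.mem 0 (i + 1)) (isEmptyV 0)))

/-- `x_i = 2 = {∅, {∅}}` (a Δ₀-property). -/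
def isTwoV (i : ℕ) : SetF :=
  .and (.all (.imp (.mem 0 (i + 1)) (.or (isEmptyV 0) (isSingEmptyV 0))))
  (.and (.ex (.and (.mem 0 (i + 1)) (isEmptyV 0)))
        (.ex (.and (.mem 0 (i + 1)) (isSingEmptyV 0))))

/-- Infinity, as in `IKP`:
`∃x(∅∈x ∧ (∀y∈x  y∪{y}∈x) ∧ (∀y∈x (y=∅ ∨ ∃z∈y y=z∪{z})))`. -/
def infinityIKP : SetF :=
  .ex (.and (.ex (.and (.mem 0 1) (isEmptyV 0)))
    (.and (.all (.imp (.mem 0 1) (.ex (.and (.mem 0 2) (isSuccV 0 1)))))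
          (.all (.imp (.mem 0 1) (.or (isEmptyV 0) (.ex (.and (.mem 0 1) (isSuccV 1 0))))))))

/-- `x_i` is an inductive set: `∅ ∈ x_i ∧ ∀y∈x_i (y∪{y} ∈ x_i)`. -/
def indV (i : ℕ) : SetF :=
  .and (.ex (.and (.mem 0 (i + 1)) (isEmptyV 0)))
       (.all (.imp (.mem 0 (i + 1)) (.ex (.and (.mem 0 (i + 2)) (isSuccV 0 1)))))

/-- Strong infinity: `∃a(Ind(a) ∧ ∀b(Ind(b) → ∀x∈a (x∈b)))`. -/
def strongInfinity : SetF :=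
  .ex (.and (indV 0) (.all (.imp (indV 0) (.all (.imp (.mem 0 2) (.mem 0 1))))))

/-- Infinity, classical version: `∃x(∅∈x ∧ ∀y∈x (y∪{y}∈x))`. -/
def zfInfinity : SetF :=
  .ex (.and (.ex (.and (.mem 0 1) (isEmptyV 0)))
            (.all (.imp (.mem 0 1) (.ex (.and (.mem 0 2) (isSuccV 0 1))))))

/-- Set induction for `φ` (free variable `0` of `φ` is the induction variable):
`(∀a(∀x∈a φ(x) → φ(a))) → ∀a φ(a)`. -/
def setInd (φ : SetF) : SetF :=
  .imp (.all (.imp (.all (.imp (.mem 0 1) (φ.rename (SetF.liftR Nat.succ)))) φ)) (.all φ)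

/-- Separation for `φ` (free variable `0` of `φ` is the separation variable):
`∀a∃y∀x(x∈y ↔ x∈a ∧ φ(x))`. -/
def sep (φ : SetF) : SetF :=
  .all (.ex (.all (SetF.biimp (.mem 0 1)
    (.and (.mem 0 2) (φ.rename (SetF.liftR (· + 2)))))))

/-- Renaming placing `x, y` (variables `0, 1` of `φ`) in the context `[y, x, a, …]`. -/
def collMap₁ : ℕ → ℕ | 0 => 1 | 1 => 0 | n + 2 => n + 3
/-- Renaming placing `x, y` in the context `[y, x, b, a, …]`. -/
def collMap₂ : ℕ → ℕ | 0 => 1 | 1 => 0 | n + 2 => n + 4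
/-- Renaming placing `x, y` in the context `[x, y, b, a, …]`. -/
def collMap₃ : ℕ → ℕ | 0 => 0 | 1 => 1 | n + 2 => n + 4

/-- Collection for `φ(x,y)` (variables `0,1`):
`∀a(∀x∈a ∃y φ(x,y) → ∃b ∀x∈a ∃y∈b φ(x,y))`. -/
def coll (φ : SetF) : SetF :=
  .all (.imp (.all (.imp (.mem 0 1) (.ex (φ.rename collMap₁))))
       (.ex (.all (.imp (.mem 0 2) (.ex (.and (.mem 0 2) (φ.rename collMap₂)))))))

/-- Strong collection for `φ(x,y)` (variables `0,1`):
`∀a(∀x∈a∃y φ → ∃b(∀x∈a∃y∈b φ ∧ ∀y∈b∃x∈a φ))`. -/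
def strongColl (φ : SetF) : SetF :=
  .all (.imp (.all (.imp (.mem 0 1) (.ex (φ.rename collMap₁))))
       (.ex (.and (.all (.imp (.mem 0 2) (.ex (.and (.mem 0 2) (φ.rename collMap₂)))))
                  (.all (.imp (.mem 0 1) (.ex (.and (.mem 0 3) (φ.rename collMap₃))))))))

/-- Renaming placing `x, y, u` (variables `0,1,2` of `ψ`) in the context `[y,x,u,c,b,a,…]`. -/
def sscMap₁ : ℕ → ℕ | 0 => 1 | 1 => 0 | 2 => 2 | n + 3 => n + 6
/-- Renaming placing `x, y, u` in the context `[y,x,d,u,c,b,a,…]`. -/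
def sscMap₂ : ℕ → ℕ | 0 => 1 | 1 => 0 | 2 => 3 | n + 3 => n + 7
/-- Renaming placing `x, y, u` in the context `[x,y,d,u,c,b,a,…]`. -/
def sscMap₃ : ℕ → ℕ | 0 => 0 | 1 => 1 | 2 => 3 | n + 3 => n + 7

/-- Subset collection for `ψ(x,y,u)` (variables `0,1,2`):
`∀a∀b∃c∀u(∀x∈a∃y∈b ψ → ∃d∈c(∀x∈a∃y∈d ψ ∧ ∀y∈d∃x∈a ψ))`. -/
def subsetColl (ψ : SetF) : SetF :=
  .all (.all (.ex (.all (.imp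
    (.all (.imp (.mem 0 4) (.ex (.and (.mem 0 4) (ψ.rename sscMap₁)))))
    (.ex (.and (.mem 0 2)
      (.and (.all (.imp (.mem 0 5) (.ex (.and (.mem 0 2) (ψ.rename sscMap₂)))))
            (.all (.imp (.mem 0 1) (.ex (.and (.mem 0 6) (ψ.rename sscMap₃))))))))))))

/-- `x_i = {x_j}` (a Δ₀-property). -/
def isSingV (i j : ℕ) : SetF :=
  .and (.all (.imp (.mem 0 (i + 1)) (.eq 0 (j + 1)))) (.mem j i)

/-- `x_i = {x_j, x_k}` (a Δ₀-property). -/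
def isUPairV (i j k : ℕ) : SetF :=
  .and (.all (.imp (.mem 0 (i + 1)) (.or (.eq 0 (j + 1)) (.eq 0 (k + 1)))))
  (.and (.mem j i) (.mem k i))

/-- `x_p = ⟨x_a, x_b⟩` (Kuratowski pair). -/
def isOPairV (p a b : ℕ) : SetF :=
  .and (.all (.imp (.mem 0 (p + 1)) (.or (isSingV 0 (a + 1)) (isUPairV 0 (a + 1) (b + 1)))))
  (.and (.ex (.and (.mem 0 (p + 1)) (isSingV 0 (a + 1))))
        (.ex (.and (.mem 0 (p + 1)) (isUPairV 0 (a + 1) (b + 1)))))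

/-- `⟨x_n, x_m⟩ ∈ x_f`, i.e. `x_f(x_n) = x_m` for a function `x_f`. -/
def appV (f n m : ℕ) : SetF := .ex (.and (.mem 0 (f + 1)) (isOPairV 0 (n + 1) (m + 1)))

/-- `x_f : x_a → x_b` : `x_f` is a function from `x_a` to `x_b` (a Δ₀-property). -/
def isFunFromTo (f a b : ℕ) : SetF :=
  .and (.all (.imp (.mem 0 (f + 1))
          (.ex (.and (.mem 0 (a + 2)) (.ex (.and (.mem 0 (b + 3)) (isOPairV 2 1 0)))))))
  (.and (.all (.imp (.mem 0 (a + 1))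
          (.ex (.and (.mem 0 (b + 2)) (.ex (.and (.mem 0 (f + 3)) (isOPairV 0 2 1)))))))
        (.all (.imp (.mem 0 (a + 1)) (.all (.imp (.mem 0 (b + 2)) (.all (.imp (.mem 0 (b + 3))
          (.imp (.and (appV (f + 3) 2 1) (appV (f + 3) 2 0)) (.eq 1 0)))))))))

/-- The exponentiation axiom `Exp`: `∀x∀y∃z∀f(f ∈ z ↔ f : x → y)`. -/
def expAx : SetF := .all (.all (.ex (.all (SetF.biimp (.mem 0 1) (isFunFromTo 0 3 2)))))

/-- `x_i = ω`: `x_i` is the least inductive set. -/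
def isOmegaV (i : ℕ) : SetF :=
  .and (indV i) (.all (.imp (indV 0) (.all (.imp (.mem 0 (i + 2)) (.mem 0 1)))))

/-- Markov's principle:
`∀α : ℕ → 2 (¬∀n∈ℕ α(n)=0 → ∃n∈ℕ α(n)=1)`. -/
def markov : SetF :=
  .all (.imp (isOmegaV 0) (.all (.imp (isTwoV 0) (.all (.imp (isFunFromTo 0 2 1)
    (.imp (SetF.neg (.all (.imp (.mem 0 3) (.ex (.and (isEmptyV 0) (appV 2 1 0))))))
          (.ex (.and (.mem 0 3) (.ex (.and (isSingEmptyV 0) (appV 2 1 0)))))))))))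

/-- The axiom of choice:
`∀a((∀x∈a∀y∈a(x≠y → x∩y=∅)) → ∃b∀x∈a∃!z∈b z∈x)`. -/
def choiceAx : SetF :=
  .all (.imp
    (.all (.imp (.mem 0 1) (.all (.imp (.mem 0 2)
        (.imp (SetF.neg (.eq 1 0)) (.all (.imp (.mem 0 2) (.imp (.mem 0 1) .bot))))))))
    (.ex (.all (.imp (.mem 0 2)
      (.ex (.and (.mem 0 2) (.and (.mem 0 1)
        (.all (.imp (.mem 0 3) (.imp (.mem 0 2) (.eq 0 1)))))))))))

/-! ### Axiom schemes and theories -/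

/-- The set induction scheme. -/
def SetInductionScheme : Set SetF := {F | ∃ φ : SetF, F = setInd φ}

/-- The full separation scheme. -/
def SeparationScheme : Set SetF := {F | ∃ φ : SetF, F = sep φ}

/-- Separation for formulas in a class `C`. -/
def SepScheme (C : Set SetF) : Set SetF := {F | ∃ φ ∈ C, F = sep φ}

/-- The Δ₀- (bounded) separation scheme. -/
def Delta0SeparationScheme : Set SetF := {F | ∃ φ : SetF, Delta0 φ ∧ F = sep φ}

/-- The full collection scheme. -/
def CollectionScheme : Set SetF := {F | ∃ φ : SetF, F = coll φ}

/-- The Δ₀- (bounded) collection scheme. -/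
def Delta0CollectionScheme : Set SetF := {F | ∃ φ : SetF, Delta0 φ ∧ F = coll φ}

/-- The full strong collection scheme. -/
def StrongCollectionScheme : Set SetF := {F | ∃ φ : SetF, F = strongColl φ}

/-- The bounded strong collection scheme (strong collection for Δ₀-formulas). -/
def BoundedStrongCollectionScheme : Set SetF := {F | ∃ φ : SetF, Delta0 φ ∧ F = strongColl φ}

/-- The full subset collection scheme. -/
def SubsetCollectionScheme : Set SetF := {F | ∃ ψ : SetF, F = subsetColl ψ}

/-- The set-bounded subset collection scheme: subset collection for Δ₀-formulas `ψ(x,y,u)`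
in which the variable `u` is set-bounded, i.e. `ψ(x,y,u) → u ∈ t` is intuitionistically
derivable for some variable (term) `t` occurring in `ψ`. -/
def SetBoundedSubsetCollectionScheme : Set SetF :=
  {F | ∃ ψ : SetF, ∃ t : ℕ, Delta0 ψ ∧ SetF.FreeIn t ψ ∧
        Prf ∅ (.imp ψ (.mem 2 t)) ∧ F = subsetColl ψ}

/-- Intuitionistic Kripke–Platek set theory `IKP`. -/
def IKP : Set SetF :=
  {extensionality, emptySet, pairing, unionAx, infinityIKP} ∪
    SetInductionScheme ∪ Delta0SeparationScheme ∪ Delta0CollectionScheme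

/-- `IKP⁺`: `IKP` plus bounded strong collection and set-bounded subset collection. -/
def IKPplus : Set SetF :=
  IKP ∪ BoundedStrongCollectionScheme ∪ SetBoundedSubsetCollectionScheme

/-- The theory `IKP⁺ + MP + AC`. -/
def IKPplusMPAC : Set SetF := IKPplus ∪ {markov, choiceAx}

/-- Constructive Zermelo–Fraenkel set theory `CZF`. -/
def CZF : Set SetF :=
  {extensionality, emptySet, pairing, unionAx, strongInfinity} ∪
    SetInductionScheme ∪ Delta0SeparationScheme ∪ StrongCollectionScheme ∪
    SubsetCollectionScheme

/-- Intuitionistic Zermelo–Fraenkel set theory `IZF`. -/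
def IZF : Set SetF :=
  {extensionality, emptySet, pairing, unionAx, strongInfinity, powerSet} ∪
    SetInductionScheme ∪ SeparationScheme ∪ CollectionScheme

/-- The axioms of classical `ZF`. -/
def ZFAxioms : Set SetF :=
  {extensionality, emptySet, pairing, unionAx, powerSet, zfInfinity} ∪
    SetInductionScheme ∪ SeparationScheme ∪ CollectionScheme

end Axioms


/-! ## Environments -/

/-- Prepend a value to an environment (de Bruijn). -/
def econs {α : Type*} (a : α) (env : ℕ → α) : ℕ → α
  | 0 => a
  | n + 1 => env n

/-! ## Classical (Tarski) satisfaction in a `ZFSet` -/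

/-- `ZFSet` in the lowest universe. -/
abbrev ZSet : Type 1 := ZFSet.{0}


/-- Classical satisfaction of a set-theoretic formula in the transitive domain `M`,
with the true membership and equality relations. -/
def CSat (M : ZSet) : (ℕ → ZSet) → SetF → Prop
  | env, .mem i j => env i ∈ env j
  | env, .eq i j => env i = env j
  | _, .bot => False
  | env, .and φ ψ => CSat M env φ ∧ CSat M env ψ
  | env, .or φ ψ => CSat M env φ ∨ CSat M env ψ
  | env, .imp φ ψ => CSat M env φ → CSat M env ψ
  | env, .ex φ => ∃ a : ZSet, a ∈ M ∧ CSat M (econs a env) φ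
  | env, .all φ => ∀ a : ZSet, a ∈ M → CSat M (econs a env) φ

/-- `M` satisfies `φ` for all parameters from `M`. -/
def ZSatisfies (M : ZSet) (φ : SetF) : Prop :=
  ∀ env : ℕ → ZSet, (∀ n, env n ∈ M) → CSat M env φ

/-- `M` is a (nonempty) model of all axioms of `ZF`. -/
def ModelsZF (M : ZSet) : Prop :=
  (∃ x, x ∈ M) ∧ ∀ φ ∈ Axioms.ZFAxioms, ZSatisfies M φ

/-- `M` is a countable transitive model of `ZFC`. -/
def IsCTMofZFC (M : ZSet) : Prop :=
  M.IsTransitive ∧ {x : ZSet | x ∈ M}.Countable ∧ ModelsZF M ∧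
    ZSatisfies M Axioms.choiceAx

/-- There exists a countable transitive model of `ZFC`. -/
def ExistsCTM : Prop := ∃ M : ZSet, IsCTMofZFC M

/-! ## Kripke semantics for the language of set theory -/

/-- The forcing relation over a Kripke frame `K` with domains `D` and membership
relations `e`. -/
def SForces {K : Type u} [Preorder K] {α : Type v} (D : K → Set α) (e : K → α → α → Prop) :
    K → (ℕ → α) → SetF → Prop
  | v, env, .mem i j => e v (env i) (env j)
  | _, env, .eq i j => env i = env j
  | _, _, .bot => False
  | v, env, .and φ ψ => SForces D e v env φ ∧ SForces D e v env ψ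
  | v, env, .or φ ψ => SForces D e v env φ ∨ SForces D e v env ψ
  | v, env, .imp φ ψ => ∀ w, v ≤ w → SForces D e w env φ → SForces D e w env ψ
  | v, env, .ex φ => ∃ a, a ∈ D v ∧ SForces D e v (econs a env) φ
  | v, env, .all φ => ∀ w, v ≤ w → ∀ a, a ∈ D w → SForces D e w (econs a env) φ

/-- A Kripke model for set theory: a Kripke frame with increasing domains `D_v` and
increasing membership relations `e_v` on `D_v`. -/
structure SetKModel (K : Type u) [Preorder K] (α : Type v) where
  D : K → Set α
  e : K → α → α → Prop
  e_dom : ∀ v a b, e v a b → a ∈ D v ∧ b ∈ D v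
  D_mono : ∀ ⦃v w : K⦄, v ≤ w → D v ⊆ D w
  e_mono : ∀ ⦃v w : K⦄, v ≤ w → ∀ a b, e v a b → e w a b

/-- Forcing in a Kripke model for set theory. -/
def SetKModel.Forces {K : Type u} [Preorder K] {α : Type v} (M : SetKModel K α)
    (v : K) (env : ℕ → α) (φ : SetF) : Prop :=
  SForces M.D M.e v env φ

/-! ## Kripke models with classical domains -/

/-- A sound assignment: an assignment of transitive models of `ZF` to the nodes of a
Kripke frame, monotone with respect to inclusion. -/
structure SoundAssignment (K : Type u) [Preorder K] where
  M : K → ZSet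
  transitive : ∀ v, (M v).IsTransitive
  modelsZF : ∀ v, ModelsZF (M v)
  mono : ∀ ⦃v w : K⦄, v ≤ w → M v ⊆ M w

/-- Forcing in the Kripke model with classical domains `K(𝓜)` arising from a sound
assignment: domains are the `𝓜_v` and `e_v` is true membership restricted to `𝓜_v`. -/
def SoundAssignment.Forces {K : Type u} [Preorder K] (𝓜 : SoundAssignment K)
    (v : K) (env : ℕ → ZSet) (φ : SetF) : Prop :=
  SForces (fun v => {x : ZSet | x ∈ 𝓜.M v})
    (fun v a b => a ∈ b ∧ a ∈ 𝓜.M v ∧ b ∈ 𝓜.M v) v env φ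

/-- `K(𝓜) ⊩ φ` : the formula `φ` is forced at every node, for all parameters. -/
def SoundAssignment.ForcesAll {K : Type u} [Preorder K] (𝓜 : SoundAssignment K)
    (φ : SetF) : Prop :=
  ∀ (v : K) (env : ℕ → ZSet), (∀ n, env n ∈ 𝓜.M v) → 𝓜.Forces v env φ


/-! ## Propositional logic and its Kripke semantics -/

/-- Propositional formulas. -/
inductive PForm : Type where
  | atom : ℕ → PForm
  | bot : PForm
  | and : PForm → PForm → PForm
  | or  : PForm → PForm → PForm
  | imp : PForm → PForm → PForm

namespace PForm
def neg (φ : PForm) : PForm := .imp φ .bot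
end PForm

/-- The propositional forcing relation over a Kripke frame with valuation `V`. -/
def PForces {K : Type u} [Preorder K] (V : ℕ → Set K) : K → PForm → Prop
  | v, .atom n => v ∈ V n
  | _, .bot => False
  | v, .and φ ψ => PForces V v φ ∧ PForces V v ψ
  | v, .or φ ψ => PForces V v φ ∨ PForces V v ψ
  | v, .imp φ ψ => ∀ w, v ≤ w → PForces V w φ → PForces V w ψ

/-- A valuation is persistent if each `V p` is upward closed. -/
def PersistentVal {K : Type u} [Preorder K] (V : ℕ → Set K) : Prop :=
  ∀ (n : ℕ) ⦃v w : K⦄, v ≤ w → v ∈ V n → w ∈ V n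

/-- A Kripke frame: a partially ordered set. -/
structure KFrame : Type 1 where
  World : Type
  [ord : PartialOrder World]

attribute [instance] KFrame.ord

/-- A propositional formula is valid on a frame if it is forced at every node under
every persistent valuation. -/
def PValidOnFrame (F : KFrame) (φ : PForm) : Prop :=
  ∀ V : ℕ → Set F.World, PersistentVal V → ∀ v : F.World, PForces V v φ

/-- The propositional logic of a class of Kripke frames. -/
def PLogicOfFrames (𝓒 : Set KFrame) : Set PForm :=
  {φ | ∀ F ∈ 𝓒, PValidOnFrame F φ}

/-- Intuitionistic propositional logic (the logic of all Kripke frames). -/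
def IPC : Set PForm := {φ | ∀ F : KFrame, PValidOnFrame F φ}

/-- Classical evaluation of a propositional formula. -/
def PEval (f : ℕ → Prop) : PForm → Prop
  | .atom n => f n
  | .bot => False
  | .and φ ψ => PEval f φ ∧ PEval f ψ
  | .or φ ψ => PEval f φ ∨ PEval f ψ
  | .imp φ ψ => PEval f φ → PEval f ψ

/-- Classical propositional logic. -/
def CPC : Set PForm := {φ | ∀ f : ℕ → Prop, PEval f φ}

/-- A propositional logic is Kripke-complete if it is the logic of some class of
Kripke frames. -/
def PKripkeComplete (J : Set PForm) : Prop := ∃ 𝓒 : Set KFrame, J = PLogicOfFrames 𝓒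

/-- An intermediate propositional logic: `IPC ⊆ J ⊆ CPC`. -/
def IntermediatePLogic (J : Set PForm) : Prop := IPC ⊆ J ∧ J ⊆ CPC

/-! ### Propositional translations into the language of set theory -/

/-- A propositional translation assigns a set-theoretic sentence to every
propositional letter. -/
def IsPropTranslation (σ : ℕ → SetF) : Prop := ∀ n, SetF.Sentence (σ n)

/-- Extension of a propositional translation to all propositional formulas. -/
def ptrans (σ : ℕ → SetF) : PForm → SetF
  | .atom n => σ n
  | .bot => .bot
  | .and φ ψ => .and (ptrans σ φ) (ptrans σ ψ)
  | .or φ ψ => .or (ptrans σ φ) (ptrans σ ψ)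
  | .imp φ ψ => .imp (ptrans σ φ) (ptrans σ ψ)

/-- `T(J)` for a propositional logic `J`: the theory `T` together with all translations
of theorems of `J`. -/
def PTheoryOf (T : Set SetF) (J : Set PForm) : Set SetF :=
  T ∪ {F | ∃ A ∈ J, ∃ σ : ℕ → SetF, IsPropTranslation σ ∧ F = ptrans σ A}

/-- The propositional logic `L(S)` of a set theory `S`. -/
def PLogicOfTheory (S : Set SetF) : Set PForm :=
  {φ | ∀ σ : ℕ → SetF, IsPropTranslation σ → Prf S (ptrans σ φ)}

/-- The Σ₃-restricted propositional logic `L^{Σ₃}(S)` of a set theory `S`. -/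
def PLogicOfTheorySigma3 (S : Set SetF) : Set PForm :=
  {φ | ∀ σ : ℕ → SetF, IsPropTranslation σ → (∀ n, Sigma3 (σ n)) →
        Prf S (ptrans σ φ)}

/-! ## First-order logic in a relational language (without equality) -/

/-- A purely relational first-order language: a type of relation symbols with
arities. -/
structure Lang : Type 1 where
  R : Type
  ar : R → ℕ

/-- First-order formulas over a relational language `L` (de Bruijn indices,
no equality). -/
inductive QForm (L : Lang) : Type where
  | rel : (r : L.R) → (Fin (L.ar r) → ℕ) → QForm L
  | bot : QForm L
  | and : QForm L → QForm L → QForm L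
  | or  : QForm L → QForm L → QForm L
  | imp : QForm L → QForm L → QForm L
  | ex  : QForm L → QForm L
  | all : QForm L → QForm L

namespace QForm

variable {L : Lang}

def neg (φ : QForm L) : QForm L := .imp φ .bot

def rename (f : ℕ → ℕ) : QForm L → QForm L
  | rel r v => rel r (fun i => f (v i))
  | bot => bot
  | and φ ψ => and (rename f φ) (rename f ψ)
  | or φ ψ => or (rename f φ) (rename f ψ)
  | imp φ ψ => imp (rename f φ) (rename f ψ)
  | ex φ => ex (rename (SetF.liftR f) φ)
  | all φ => all (rename (SetF.liftR f) φ)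

def shift (φ : QForm L) : QForm L := rename Nat.succ φ

def instVar (k : ℕ) (φ : QForm L) : QForm L :=
  rename (fun n => match n with | 0 => k | m + 1 => m) φ

end QForm

/-- Natural deduction for intuitionistic first-order logic (no equality) over a
relational language `L`. -/
inductive QPrf {L : Lang} : Set (QForm L) → QForm L → Prop where
  | hyp {Γ φ} : φ ∈ Γ → QPrf Γ φ
  | botE {Γ φ} : QPrf Γ .bot → QPrf Γ φ
  | andI {Γ φ ψ} : QPrf Γ φ → QPrf Γ ψ → QPrf Γ (.and φ ψ)
  | andE₁ {Γ φ ψ} : QPrf Γ (.and φ ψ) → QPrf Γ φ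
  | andE₂ {Γ φ ψ} : QPrf Γ (.and φ ψ) → QPrf Γ ψ
  | orI₁ {Γ φ ψ} : QPrf Γ φ → QPrf Γ (.or φ ψ)
  | orI₂ {Γ φ ψ} : QPrf Γ ψ → QPrf Γ (.or φ ψ)
  | orE {Γ φ ψ χ} : QPrf Γ (.or φ ψ) → QPrf (insert φ Γ) χ → QPrf (insert ψ Γ) χ → QPrf Γ χ
  | impI {Γ φ ψ} : QPrf (insert φ Γ) ψ → QPrf Γ (.imp φ ψ)
  | impE {Γ φ ψ} : QPrf Γ (.imp φ ψ) → QPrf Γ φ → QPrf Γ ψ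
  | allI {Γ φ} : QPrf (QForm.shift '' Γ) φ → QPrf Γ (.all φ)
  | allE {Γ φ} (k : ℕ) : QPrf Γ (.all φ) → QPrf Γ (φ.instVar k)
  | exI {Γ φ} (k : ℕ) : QPrf Γ (φ.instVar k) → QPrf Γ (.ex φ)
  | exE {Γ φ ψ} : QPrf Γ (.ex φ) → QPrf (insert φ (QForm.shift '' Γ)) ψ.shift → QPrf Γ ψ

/-- Intuitionistic first-order logic `IQC` over the language `L`. -/
def IQC (L : Lang) : Set (QForm L) := {φ | QPrf ∅ φ}

/-! ### Kripke models for `IQC` -/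

/-- A Kripke model for intuitionistic first-order logic over the relational language
`L`: increasing (nonempty) domains and increasing interpretations of the relation
symbols on the domains. -/
structure QModel (L : Lang) (K : Type u) [Preorder K] (α : Type v) where
  D : K → Set α
  I : (v : K) → (r : L.R) → ((Fin (L.ar r) → α) → Prop)
  D_ne : ∀ v, (D v).Nonempty
  D_mono : ∀ ⦃v w : K⦄, v ≤ w → D v ⊆ D w
  I_mono : ∀ ⦃v w : K⦄, v ≤ w → ∀ r t, I v r t → I w r t
  I_dom : ∀ v r t, I v r t → ∀ i, t i ∈ D v

/-- The forcing relation in a Kripke model for `IQC`. -/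
def QForces {L : Lang} {K : Type u} [Preorder K] {α : Type v} (M : QModel L K α) :
    K → (ℕ → α) → QForm L → Prop
  | v, env, .rel r t => M.I v r (fun i => env (t i))
  | _, _, .bot => False
  | v, env, .and φ ψ => QForces M v env φ ∧ QForces M v env ψ
  | v, env, .or φ ψ => QForces M v env φ ∨ QForces M v env ψ
  | v, env, .imp φ ψ => ∀ w, v ≤ w → QForces M w env φ → QForces M w env ψ
  | v, env, .ex φ => ∃ a, a ∈ M.D v ∧ QForces M v (econs a env) φ
  | v, env, .all φ => ∀ w, v ≤ w → ∀ a, a ∈ M.D w → QForces M w (econs a env) φ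

/-- Validity of a first-order formula in all Kripke models whose underlying frame
satisfies a property `P`. -/
def QValidOnFrames (L : Lang) (P : KFrame → Prop) (φ : QForm L) : Prop :=
  ∀ F : KFrame, P F → ∀ (α : Type) (M : QModel L F.World α) (v : F.World)
    (env : ℕ → α), (∀ n, env n ∈ M.D v) → QForces M v env φ

/-- The frame has depth at most `k`: there is no strictly increasing chain of more
than `k` nodes. -/
def FrameDepthLE (k : ℕ) (F : KFrame) : Prop :=
  ∀ f : Fin (k + 1) → F.World, ¬ StrictMono f

/-- The frame is linearly ordered. -/
def FrameLinear (F : KFrame) : Prop := ∀ a b : F.World, a ≤ b ∨ b ≤ a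

/-- `QHP_k`: the first-order logic of Kripke frames of depth at most `k`. -/
def QHP (L : Lang) (k : ℕ) : Set (QForm L) := {φ | QValidOnFrames L (FrameDepthLE k) φ}

/-- `QLC`: the first-order logic of linear Kripke frames. -/
def QLCLogic (L : Lang) : Set (QForm L) := {φ | QValidOnFrames L FrameLinear φ}

/-- The instances of the scheme `KF`: `¬¬∀x(P(x) ∨ ¬P(x))`. -/
def KFScheme (L : Lang) : Set (QForm L) :=
  {F | ∃ ψ : QForm L, F = QForm.neg (QForm.neg (.all (.or ψ (QForm.neg ψ))))}

/-- The logic `IQC + KF`. -/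
def IQCKF (L : Lang) : Set (QForm L) := {φ | QPrf (KFScheme L) φ}

/-- Classical (Tarski) satisfaction of a first-order formula. -/
def TSat {L : Lang} {α : Type v} (I : (r : L.R) → (Fin (L.ar r) → α) → Prop) :
    (ℕ → α) → QForm L → Prop
  | env, .rel r t => I r (fun i => env (t i))
  | _, .bot => False
  | env, .and φ ψ => TSat I env φ ∧ TSat I env ψ
  | env, .or φ ψ => TSat I env φ ∨ TSat I env ψ
  | env, .imp φ ψ => TSat I env φ → TSat I env ψ
  | env, .ex φ => ∃ a : α, TSat I (econs a env) φ
  | env, .all φ => ∀ a : α, TSat I (econs a env) φ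

/-- Classical first-order logic `CQC` over the language `L`. -/
def CQC (L : Lang) : Set (QForm L) :=
  {φ | ∀ (α : Type), Nonempty α →
    ∀ (I : (r : L.R) → (Fin (L.ar r) → α) → Prop) (env : ℕ → α), TSat I env φ}

/-! ### First-order translations into the language of set theory -/

/-- A first-order translation maps every `n`-ary relation symbol to a set-theoretic
formula with (at most) `n` free variables. -/
def IsQTranslation (L : Lang) (σ : (r : L.R) → SetF) : Prop :=
  ∀ r, SetF.ClosedUnder (L.ar r) (σ r)

/-- Extension of a first-order translation to all first-order formulas. -/
def qtrans {L : Lang} (σ : (r : L.R) → SetF) : QForm L → SetF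
  | .rel r v => (σ r).rename (fun i => if h : i < L.ar r then v ⟨i, h⟩ else i)
  | .bot => .bot
  | .and φ ψ => .and (qtrans σ φ) (qtrans σ ψ)
  | .or φ ψ => .or (qtrans σ φ) (qtrans σ ψ)
  | .imp φ ψ => .imp (qtrans σ φ) (qtrans σ ψ)
  | .ex φ => .ex (qtrans σ φ)
  | .all φ => .all (qtrans σ φ)

/-- The relative translation `(φ^E)^σ`: quantifiers are relativised to the fresh
unary predicate `E`, whose interpretation under the translation is the set-theoretic
formula `ε` (with free variable `0`). -/
def relTrans {L : Lang} (ε : SetF) (σ : (r : L.R) → SetF) : QForm L → SetF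
  | .rel r v => (σ r).rename (fun i => if h : i < L.ar r then v ⟨i, h⟩ else i)
  | .bot => .bot
  | .and φ ψ => .and (relTrans ε σ φ) (relTrans ε σ ψ)
  | .or φ ψ => .or (relTrans ε σ φ) (relTrans ε σ ψ)
  | .imp φ ψ => .imp (relTrans ε σ φ) (relTrans ε σ ψ)
  | .ex φ => .ex (.and ε (relTrans ε σ φ))
  | .all φ => .all (.imp ε (relTrans ε σ φ))

/-- The first-order logic `QL(T)` of a set theory `T`. -/
def QL (L : Lang) (T : Set SetF) : Set (QForm L) :=
  {φ | ∀ σ, IsQTranslation L σ → Prf T (qtrans σ φ)}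

/-- The relative first-order logic `QL_E(T)` of a set theory `T`. -/
def QLE (L : Lang) (T : Set SetF) : Set (QForm L) :=
  {φ | ∀ (ε : SetF) (σ : (r : L.R) → SetF), SetF.ClosedUnder 1 ε →
        IsQTranslation L σ → Prf T (relTrans ε σ φ)}

/-- The Σ₃-restricted relative first-order logic `QL_E^{Σ₃}(T)` of a set theory `T`. -/
def QLESigma3 (L : Lang) (T : Set SetF) : Set (QForm L) :=
  {φ | ∀ (ε : SetF) (σ : (r : L.R) → SetF), SetF.ClosedUnder 1 ε → Sigma3 ε →
        IsQTranslation L σ → (∀ r, Sigma3 (σ r)) → Prf T (relTrans ε σ φ)}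

/-- The `C`-restricted first-order logic `QL^C(T)` of a set theory `T`:
only translations whose values lie in the class `C` are considered. -/
def QLRestr (L : Lang) (C : Set SetF) (T : Set SetF) : Set (QForm L) :=
  {φ | ∀ σ, IsQTranslation L σ → (∀ r, σ r ∈ C) → Prf T (qtrans σ φ)}

/-- `T(J)` for a first-order logic `J`: the theory `T` together with all translations
of theorems of `J`. -/
def QTheoryOf (L : Lang) (T : Set SetF) (J : Set (QForm L)) : Set SetF :=
  T ∪ {F | ∃ A ∈ J, ∃ σ, IsQTranslation L σ ∧ F = qtrans σ A}

/-! ## First-order logic with equality in a relational language -/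

/-- First-order formulas with equality over a relational language `L`. -/
inductive QEForm (L : Lang) : Type where
  | rel : (r : L.R) → (Fin (L.ar r) → ℕ) → QEForm L
  | eq : ℕ → ℕ → QEForm L
  | bot : QEForm L
  | and : QEForm L → QEForm L → QEForm L
  | or  : QEForm L → QEForm L → QEForm L
  | imp : QEForm L → QEForm L → QEForm L
  | ex  : QEForm L → QEForm L
  | all : QEForm L → QEForm L

namespace QEForm

variable {L : Lang}

def neg (φ : QEForm L) : QEForm L := .imp φ .bot

def rename (f : ℕ → ℕ) : QEForm L → QEForm L
  | rel r v => rel r (fun i => f (v i))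
  | eq i j => eq (f i) (f j)
  | bot => bot
  | and φ ψ => and (rename f φ) (rename f ψ)
  | or φ ψ => or (rename f φ) (rename f ψ)
  | imp φ ψ => imp (rename f φ) (rename f ψ)
  | ex φ => ex (rename (SetF.liftR f) φ)
  | all φ => all (rename (SetF.liftR f) φ)

def shift (φ : QEForm L) : QEForm L := rename Nat.succ φ

def instVar (k : ℕ) (φ : QEForm L) : QEForm L :=
  rename (fun n => match n with | 0 => k | m + 1 => m) φ

end QEForm

/-- Natural deduction for intuitionistic first-order logic with equality over a
relational language `L`. -/
inductive QEPrf {L : Lang} : Set (QEForm L) → QEForm L → Prop where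
  | hyp {Γ φ} : φ ∈ Γ → QEPrf Γ φ
  | botE {Γ φ} : QEPrf Γ .bot → QEPrf Γ φ
  | andI {Γ φ ψ} : QEPrf Γ φ → QEPrf Γ ψ → QEPrf Γ (.and φ ψ)
  | andE₁ {Γ φ ψ} : QEPrf Γ (.and φ ψ) → QEPrf Γ φ
  | andE₂ {Γ φ ψ} : QEPrf Γ (.and φ ψ) → QEPrf Γ ψ
  | orI₁ {Γ φ ψ} : QEPrf Γ φ → QEPrf Γ (.or φ ψ)
  | orI₂ {Γ φ ψ} : QEPrf Γ ψ → QEPrf Γ (.or φ ψ)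
  | orE {Γ φ ψ χ} : QEPrf Γ (.or φ ψ) → QEPrf (insert φ Γ) χ → QEPrf (insert ψ Γ) χ →
      QEPrf Γ χ
  | impI {Γ φ ψ} : QEPrf (insert φ Γ) ψ → QEPrf Γ (.imp φ ψ)
  | impE {Γ φ ψ} : QEPrf Γ (.imp φ ψ) → QEPrf Γ φ → QEPrf Γ ψ
  | allI {Γ φ} : QEPrf (QEForm.shift '' Γ) φ → QEPrf Γ (.all φ)
  | allE {Γ φ} (k : ℕ) : QEPrf Γ (.all φ) → QEPrf Γ (φ.instVar k)
  | exI {Γ φ} (k : ℕ) : QEPrf Γ (φ.instVar k) → QEPrf Γ (.ex φ)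
  | exE {Γ φ ψ} : QEPrf Γ (.ex φ) → QEPrf (insert φ (QEForm.shift '' Γ)) ψ.shift →
      QEPrf Γ ψ
  | eqRefl {Γ} (i : ℕ) : QEPrf Γ (.eq i i)
  | eqSym {Γ i j} : QEPrf Γ (.eq i j) → QEPrf Γ (.eq j i)
  | eqTrans {Γ i j k} : QEPrf Γ (.eq i j) → QEPrf Γ (.eq j k) → QEPrf Γ (.eq i k)
  | relCong {Γ} {r : L.R} {v : Fin (L.ar r) → ℕ} {p : Fin (L.ar r)} {i j : ℕ} :
      QEPrf Γ (.eq i j) → QEPrf Γ (.rel r v) → v p = i →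
      QEPrf Γ (.rel r (Function.update v p j))

/-- Intuitionistic first-order logic with equality `IQC⁼` over the language `L`. -/
def IQCeq (L : Lang) : Set (QEForm L) := {φ | QEPrf ∅ φ}

/-- Extension of a first-order equality translation (which sends equality to
equality) to all first-order formulas with equality. -/
def qetrans {L : Lang} (σ : (r : L.R) → SetF) : QEForm L → SetF
  | .rel r v => (σ r).rename (fun i => if h : i < L.ar r then v ⟨i, h⟩ else i)
  | .eq i j => .eq i j
  | .bot => .bot
  | .and φ ψ => .and (qetrans σ φ) (qetrans σ ψ)
  | .or φ ψ => .or (qetrans σ φ) (qetrans σ ψ)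
  | .imp φ ψ => .imp (qetrans σ φ) (qetrans σ ψ)
  | .ex φ => .ex (qetrans σ φ)
  | .all φ => .all (qetrans σ φ)

/-- The first-order logic with equality `QL⁼(T)` of a set theory `T`. -/
def QLeq (L : Lang) (T : Set SetF) : Set (QEForm L) :=
  {φ | ∀ σ, IsQTranslation L σ → Prf T (qetrans σ φ)}

/-- The full countable relational language, with countably many relation symbols of
every arity. -/
def FullLang : Lang := ⟨ℕ × ℕ, Prod.snd⟩

/-! ### Auxiliary machinery -/

namespace SetF

theorem liftR_liftR (f g : ℕ → ℕ) (n : ℕ) : liftR f (liftR g n) = liftR (f ∘ g) n := by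
  cases n <;> rfl

theorem liftR_comp (f g : ℕ → ℕ) : liftR f ∘ liftR g = liftR (f ∘ g) :=
  funext (liftR_liftR f g)

theorem rename_rename (φ : SetF) : ∀ f g, rename f (rename g φ) = rename (f ∘ g) φ := by
  induction φ with
  | mem i j => intro f g; rfl
  | eq i j => intro f g; rfl
  | bot => intro f g; rfl
  | and φ ψ ih1 ih2 => intro f g; simp [rename, ih1, ih2]
  | or φ ψ ih1 ih2 => intro f g; simp [rename, ih1, ih2]
  | imp φ ψ ih1 ih2 => intro f g; simp [rename, ih1, ih2]
  | ex φ ih => intro f g; simp [rename, ih, liftR_comp]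
  | all φ ih => intro f g; simp [rename, ih, liftR_comp]

theorem rename_congrFree (φ : SetF) :
    ∀ f g, (∀ n, FreeIn n φ → f n = g n) → rename f φ = rename g φ := by
  induction φ with
  | mem i j => intro f g h; simp [rename, h i (Or.inl rfl), h j (Or.inr rfl)]
  | eq i j => intro f g h; simp [rename, h i (Or.inl rfl), h j (Or.inr rfl)]
  | bot => intro f g h; rfl
  | and φ ψ ih1 ih2 =>
      intro f g h
      simp [rename, ih1 f g fun n hn => h n (Or.inl hn), ih2 f g fun n hn => h n (Or.inr hn)]
  | or φ ψ ih1 ih2 =>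
      intro f g h
      simp [rename, ih1 f g fun n hn => h n (Or.inl hn), ih2 f g fun n hn => h n (Or.inr hn)]
  | imp φ ψ ih1 ih2 =>
      intro f g h
      simp [rename, ih1 f g fun n hn => h n (Or.inl hn), ih2 f g fun n hn => h n (Or.inr hn)]
  | ex φ ih =>
      intro f g h
      have : ∀ n, FreeIn n φ → liftR f n = liftR g n := by
        intro n hn
        match n with
        | 0 => rfl
        | m + 1 => show f m + 1 = g m + 1; rw [h m hn]
      simp [rename, ih _ _ this]
  | all φ ih =>
      intro f g h
      have : ∀ n, FreeIn n φ → liftR f n = liftR g n := by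
        intro n hn
        match n with
        | 0 => rfl
        | m + 1 => show f m + 1 = g m + 1; rw [h m hn]
      simp [rename, ih _ _ this]

theorem lt_of_closed_free (φ : SetF) :
    ∀ n m, ClosedUnder n φ → FreeIn m φ → m < n := by
  induction φ with
  | mem i j => intro n m hc hf; rcases hf with rfl | rfl; exacts [hc.1, hc.2]
  | eq i j => intro n m hc hf; rcases hf with rfl | rfl; exacts [hc.1, hc.2]
  | bot => intro n m _ hf; exact hf.elim
  | and φ ψ ih1 ih2 => intro n m hc hf; rcases hf with hf | hf
                       exacts [ih1 n m hc.1 hf, ih2 n m hc.2 hf]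
  | or φ ψ ih1 ih2 => intro n m hc hf; rcases hf with hf | hf
                      exacts [ih1 n m hc.1 hf, ih2 n m hc.2 hf]
  | imp φ ψ ih1 ih2 => intro n m hc hf; rcases hf with hf | hf
                       exacts [ih1 n m hc.1 hf, ih2 n m hc.2 hf]
  | ex φ ih => intro n m hc hf; have := ih (n + 1) (m + 1) hc hf; omega
  | all φ ih => intro n m hc hf; have := ih (n + 1) (m + 1) hc hf; omega

theorem rename_shift (ρ : ℕ → ℕ) (χ : SetF) :
    rename (liftR ρ) (shift χ) = shift (rename ρ χ) := by
  simp only [shift, rename_rename]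
  congr 1

end SetF

open SetF in
theorem image_shift_rename (ρ : ℕ → ℕ) (Γ : Set SetF) :
    SetF.shift '' (SetF.rename ρ '' Γ) = SetF.rename (liftR ρ) '' (SetF.shift '' Γ) := by
  rw [← Set.image_comp, ← Set.image_comp]
  exact Set.image_congr' (fun χ => (rename_shift ρ χ).symm)

open SetF in
theorem instVar_rename (ρ : ℕ → ℕ) (k : ℕ) (φ : SetF) :
    instVar (ρ k) (rename (liftR ρ) φ) = rename ρ (instVar k φ) := by
  simp only [instVar, rename_rename]
  congr 1
  funext n
  match n with
  | 0 => rfl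
  | m + 1 => rfl

theorem Prf.weaken {Γ : Set SetF} {φ : SetF} (h : Prf Γ φ) :
    ∀ {Δ : Set SetF}, Γ ⊆ Δ → Prf Δ φ := by
  induction h with
  | hyp h => exact fun hs => .hyp (hs h)
  | botE _ ih => exact fun hs => .botE (ih hs)
  | andI _ _ ih1 ih2 => exact fun hs => .andI (ih1 hs) (ih2 hs)
  | andE₁ _ ih => exact fun hs => .andE₁ (ih hs)
  | andE₂ _ ih => exact fun hs => .andE₂ (ih hs)
  | orI₁ _ ih => exact fun hs => .orI₁ (ih hs)
  | orI₂ _ ih => exact fun hs => .orI₂ (ih hs)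
  | orE _ _ _ ih ih1 ih2 =>
      exact fun hs => .orE (ih hs) (ih1 (Set.insert_subset_insert hs))
        (ih2 (Set.insert_subset_insert hs))
  | impI _ ih => exact fun hs => .impI (ih (Set.insert_subset_insert hs))
  | impE _ _ ih1 ih2 => exact fun hs => .impE (ih1 hs) (ih2 hs)
  | allI _ ih => exact fun hs => .allI (ih (Set.image_mono hs))
  | allE k _ ih => exact fun hs => .allE k (ih hs)
  | exI k _ ih => exact fun hs => .exI k (ih hs)
  | exE _ _ ih1 ih2 =>
      exact fun hs => .exE (ih1 hs)
        (ih2 (Set.insert_subset_insert (Set.image_mono hs)))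
  | eqRefl i => exact fun _ => .eqRefl i
  | eqSym _ ih => exact fun hs => .eqSym (ih hs)
  | eqTrans _ _ ih1 ih2 => exact fun hs => .eqTrans (ih1 hs) (ih2 hs)
  | eqMemL _ _ ih1 ih2 => exact fun hs => .eqMemL (ih1 hs) (ih2 hs)
  | eqMemR _ _ ih1 ih2 => exact fun hs => .eqMemR (ih1 hs) (ih2 hs)

open SetF in
theorem Prf.renamePrf {Γ : Set SetF} {φ : SetF} (h : Prf Γ φ) :
    ∀ ρ : ℕ → ℕ, Prf (SetF.rename ρ '' Γ) (SetF.rename ρ φ) := by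
  induction h with
  | hyp h => exact fun ρ => .hyp ⟨_, h, rfl⟩
  | botE _ ih => exact fun ρ => .botE (ih ρ)
  | andI _ _ ih1 ih2 => exact fun ρ => .andI (ih1 ρ) (ih2 ρ)
  | andE₁ _ ih => exact fun ρ => .andE₁ (ih ρ)
  | andE₂ _ ih => exact fun ρ => .andE₂ (ih ρ)
  | orI₁ _ ih => exact fun ρ => .orI₁ (ih ρ)
  | orI₂ _ ih => exact fun ρ => .orI₂ (ih ρ)
  | orE _ _ _ ih ih1 ih2 =>
      intro ρ
      refine .orE (ih ρ) ?_ ?_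
      · have := ih1 ρ; rwa [Set.image_insert_eq] at this
      · have := ih2 ρ; rwa [Set.image_insert_eq] at this
  | impI _ ih =>
      intro ρ
      refine .impI ?_
      have := ih ρ; rwa [Set.image_insert_eq] at this
  | impE _ _ ih1 ih2 => exact fun ρ => .impE (ih1 ρ) (ih2 ρ)
  | allI _ ih =>
      intro ρ
      refine .allI ?_
      rw [image_shift_rename]
      exact ih (liftR ρ)
  | allE k _ ih =>
      intro ρ
      rw [← instVar_rename]
      exact .allE (ρ k) (ih ρ)
  | exI k _ ih =>
      intro ρ
      refine .exI (ρ k) ?_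
      rw [instVar_rename]
      exact ih ρ
  | exE _ _ ih1 ih2 =>
      intro ρ
      refine .exE (ih1 ρ) ?_
      rw [image_shift_rename ρ, ← rename_shift ρ]
      have := ih2 (liftR ρ)
      rwa [Set.image_insert_eq] at this
  | eqRefl i => exact fun ρ => .eqRefl (ρ i)
  | eqSym _ ih => exact fun ρ => .eqSym (ih ρ)
  | eqTrans _ _ ih1 ih2 => exact fun ρ => .eqTrans (ih1 ρ) (ih2 ρ)
  | eqMemL _ _ ih1 ih2 => exact fun ρ => .eqMemL (ih1 ρ) (ih2 ρ)
  | eqMemR _ _ ih1 ih2 => exact fun ρ => .eqMemR (ih1 ρ) (ih2 ρ)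

open SetF in
/-- Leibniz replacement: renames agreeing up to a provable equality give
interderivable formulas. -/
theorem eqRepl (φ : SetF) :
    ∀ (Γ : Set SetF) (f g : ℕ → ℕ) (i j : ℕ),
      (∀ n, FreeIn n φ → f n = g n ∨ (f n = i ∧ g n = j)) →
      Prf Γ (.eq i j) → Prf Γ (rename f φ) → Prf Γ (rename g φ) := by
  have key : ∀ (Γ : Set SetF) (f g : ℕ → ℕ) (i j : ℕ) (n : ℕ),
      (f n = g n ∨ (f n = i ∧ g n = j)) → Prf Γ (.eq i j) → Prf Γ (.eq (f n) (g n)) := by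
    intro Γ f g i j n hn hEq
    rcases hn with h | ⟨h1, h2⟩
    · rw [h]; exact .eqRefl _
    · rw [h1, h2]; exact hEq
  induction φ with
  | mem a b =>
      intro Γ f g i j hc hEq h
      exact .eqMemR (key Γ f g i j b (hc b (Or.inr rfl)) hEq)
        (.eqMemL (key Γ f g i j a (hc a (Or.inl rfl)) hEq) h)
  | eq a b =>
      intro Γ f g i j hc hEq h
      exact .eqTrans (.eqTrans (.eqSym (key Γ f g i j a (hc a (Or.inl rfl)) hEq)) h)
        (key Γ f g i j b (hc b (Or.inr rfl)) hEq)
  | bot => intro Γ f g i j _ _ h; exact h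
  | and φ ψ ih1 ih2 =>
      intro Γ f g i j hc hEq h
      exact .andI (ih1 Γ f g i j (fun n hn => hc n (Or.inl hn)) hEq (.andE₁ h))
        (ih2 Γ f g i j (fun n hn => hc n (Or.inr hn)) hEq (.andE₂ h))
  | or φ ψ ih1 ih2 =>
      intro Γ f g i j hc hEq h
      refine .orE h ?_ ?_
      · exact .orI₁ (ih1 _ f g i j (fun n hn => hc n (Or.inl hn))
          (hEq.weaken (Set.subset_insert _ _)) (.hyp (Set.mem_insert _ _)))
      · exact .orI₂ (ih2 _ f g i j (fun n hn => hc n (Or.inr hn))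
          (hEq.weaken (Set.subset_insert _ _)) (.hyp (Set.mem_insert _ _)))
  | imp φ ψ ih1 ih2 =>
      intro Γ f g i j hc hEq h
      refine .impI ?_
      have hEq' : Prf (insert (rename g φ) Γ) (SetF.eq i j) :=
        hEq.weaken (Set.subset_insert _ _)
      have hφf : Prf (insert (rename g φ) Γ) (rename f φ) :=
        ih1 _ g f j i (fun n hn => ((hc n (Or.inl hn)).imp Eq.symm And.symm))
          (.eqSym hEq') (.hyp (Set.mem_insert _ _))
      have hψf : Prf (insert (rename g φ) Γ) (rename f ψ) :=
        .impE (h.weaken (Set.subset_insert _ _)) hφf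
      exact ih2 _ f g i j (fun n hn => hc n (Or.inr hn)) hEq' hψf
  | ex φ ih =>
      intro Γ f g i j hc hEq h
      refine .exE h ?_
      show Prf _ (shift (SetF.ex (rename (liftR g) φ)))
      have hbody : Prf (insert (rename (liftR f) φ) (SetF.shift '' Γ)) (rename (liftR g) φ) := by
        refine ih _ (liftR f) (liftR g) (i + 1) (j + 1) ?_ ?_ (.hyp (Set.mem_insert _ _))
        · intro n hn
          match n with
          | 0 => exact Or.inl rfl
          | m + 1 =>
            rcases hc m hn with h | ⟨h1, h2⟩
            · exact Or.inl (by show f m + 1 = g m + 1; rw [h])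
            · exact Or.inr ⟨by show f m + 1 = i + 1; rw [h1], by show g m + 1 = j + 1; rw [h2]⟩
        · have := hEq.renamePrf Nat.succ
          exact Prf.weaken this (Set.subset_insert _ _)
      have : SetF.instVar 0 (rename (liftR (Nat.succ ∘ g)) φ) = rename (liftR g) φ := by
        simp only [instVar, rename_rename]
        congr 1
        funext n
        match n with
        | 0 => rfl
        | m + 1 => rfl
      have hshift : shift (SetF.ex (rename (liftR g) φ))
          = SetF.ex (rename (liftR (Nat.succ ∘ g)) φ) := by
        simp only [shift, rename, rename_rename, liftR_comp]
      rw [hshift]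
      exact .exI 0 (this ▸ hbody)
  | all φ ih =>
      intro Γ f g i j hc hEq h
      refine .allI ?_
      have hsh := h.renamePrf Nat.succ
      simp only [rename, rename_rename, liftR_comp] at hsh
      have hinst := Prf.allE 0 hsh
      have hieq : SetF.instVar 0 (rename (liftR (Nat.succ ∘ f)) φ) = rename (liftR f) φ := by
        simp only [instVar, rename_rename]
        congr 1
        funext n
        match n with
        | 0 => rfl
        | m + 1 => rfl
      rw [hieq] at hinst
      refine ih _ (liftR f) (liftR g) (i + 1) (j + 1) ?_ ?_ hinst
      · intro n hn
        match n with
        | 0 => exact Or.inl rfl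
        | m + 1 =>
          rcases hc m hn with h' | ⟨h1, h2⟩
          · exact Or.inl (by show f m + 1 = g m + 1; rw [h'])
          · exact Or.inr ⟨by show f m + 1 = i + 1; rw [h1], by show g m + 1 = j + 1; rw [h2]⟩
      · exact hEq.renamePrf Nat.succ

/-! ### Translations commute with renaming -/

open SetF in
theorem qetrans_rename {L : Lang} {σ : (r : L.R) → SetF} (hσ : IsQTranslation L σ)
    (φ : QEForm L) : ∀ f, qetrans σ (QEForm.rename f φ) = SetF.rename f (qetrans σ φ) := by
  induction φ with
  | rel r v =>
      intro f
      show (σ r).rename _ = SetF.rename f ((σ r).rename _)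
      rw [rename_rename]
      refine rename_congrFree (σ r) _ _ ?_
      intro n hn
      have hlt : n < L.ar r := lt_of_closed_free (σ r) _ n (hσ r) hn
      simp [Function.comp, hlt]
  | eq i j => intro f; rfl
  | bot => intro f; rfl
  | and φ ψ ih1 ih2 => intro f; simp [QEForm.rename, qetrans, rename, ih1, ih2]
  | or φ ψ ih1 ih2 => intro f; simp [QEForm.rename, qetrans, rename, ih1, ih2]
  | imp φ ψ ih1 ih2 => intro f; simp [QEForm.rename, qetrans, rename, ih1, ih2]
  | ex φ ih => intro f; simp [QEForm.rename, qetrans, rename, ih]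
  | all φ ih => intro f; simp [QEForm.rename, qetrans, rename, ih]

open SetF in
theorem qetrans_shift {L : Lang} {σ : (r : L.R) → SetF} (hσ : IsQTranslation L σ)
    (φ : QEForm L) : qetrans σ (QEForm.shift φ) = SetF.shift (qetrans σ φ) :=
  qetrans_rename hσ φ Nat.succ

theorem qetrans_instVar {L : Lang} {σ : (r : L.R) → SetF} (hσ : IsQTranslation L σ)
    (k : ℕ) (φ : QEForm L) :
    qetrans σ (QEForm.instVar k φ) = SetF.instVar k (qetrans σ φ) :=
  qetrans_rename hσ φ _

theorem image_qetrans_shift {L : Lang} {σ : (r : L.R) → SetF} (hσ : IsQTranslation L σ)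
    (Γ : Set (QEForm L)) :
    qetrans σ '' (QEForm.shift '' Γ) = SetF.shift '' (qetrans σ '' Γ) := by
  rw [← Set.image_comp, ← Set.image_comp]
  exact Set.image_congr' fun φ => qetrans_shift hσ φ

/-! ### Soundness of the equality translation -/

open SetF in
theorem qe_sound {L : Lang} {σ : (r : L.R) → SetF} (hσ : IsQTranslation L σ)
    {Γ : Set (QEForm L)} {φ : QEForm L} (h : QEPrf Γ φ) :
    Prf (qetrans σ '' Γ) (qetrans σ φ) := by
  induction h with
  | hyp h => exact .hyp ⟨_, h, rfl⟩
  | botE _ ih => exact .botE ih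
  | andI _ _ ih1 ih2 => exact .andI ih1 ih2
  | andE₁ _ ih => exact .andE₁ ih
  | andE₂ _ ih => exact .andE₂ ih
  | orI₁ _ ih => exact .orI₁ ih
  | orI₂ _ ih => exact .orI₂ ih
  | orE _ _ _ ih ih1 ih2 =>
      refine .orE ih ?_ ?_ <;> rwa [Set.image_insert_eq] at *
  | impI _ ih =>
      refine .impI ?_; rwa [Set.image_insert_eq] at ih
  | impE _ _ ih1 ih2 => exact .impE ih1 ih2
  | allI _ ih =>
      refine .allI ?_
      rwa [image_qetrans_shift hσ] at ih
  | allE k _ ih =>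
      rw [qetrans_instVar hσ]
      exact .allE k ih
  | exI k _ ih =>
      refine .exI k ?_
      rwa [qetrans_instVar hσ] at ih
  | exE _ _ ih1 ih2 =>
      refine .exE ih1 ?_
      rwa [Set.image_insert_eq, image_qetrans_shift hσ, qetrans_shift hσ] at ih2
  | eqRefl i => exact .eqRefl i
  | eqSym _ ih => exact .eqSym ih
  | eqTrans _ _ ih1 ih2 => exact .eqTrans ih1 ih2
  | @relCong Γ r v p i j _ _ hv ih1 ih2 =>
      refine eqRepl (σ r) _ (fun n => if h : n < L.ar r then v ⟨n, h⟩ else n)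
        (fun n => if h : n < L.ar r then Function.update v p j ⟨n, h⟩ else n) i j ?_ ih1 ih2
      intro n hn
      have hlt : n < L.ar r := lt_of_closed_free (σ r) _ n (hσ r) hn
      by_cases hp : (⟨n, hlt⟩ : Fin (L.ar r)) = p
      · subst hp
        exact Or.inr ⟨by simp [hlt, hv], by simp [hlt]⟩
      · exact Or.inl (by simp [hlt, Function.update_of_ne hp])

/-! ### A classical evaluation refuting `∃x∃y ¬ x = y` in `IQC⁼` -/

def qev {L : Lang} : QEForm L → Prop
  | .rel _ _ => True
  | .eq _ _ => True
  | .bot => False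
  | .and φ ψ => qev φ ∧ qev ψ
  | .or φ ψ => qev φ ∨ qev ψ
  | .imp φ ψ => qev φ → qev ψ
  | .ex φ => qev φ
  | .all φ => qev φ

theorem qev_rename {L : Lang} (φ : QEForm L) : ∀ f, qev (QEForm.rename f φ) ↔ qev φ := by
  induction φ with
  | rel r v => intro f; rfl
  | eq i j => intro f; rfl
  | bot => intro f; rfl
  | and φ ψ ih1 ih2 => intro f; simp [QEForm.rename, qev, ih1, ih2]
  | or φ ψ ih1 ih2 => intro f; simp [QEForm.rename, qev, ih1, ih2]
  | imp φ ψ ih1 ih2 => intro f; simp [QEForm.rename, qev, ih1, ih2]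
  | ex φ ih => intro f; simp [QEForm.rename, qev, ih]
  | all φ ih => intro f; simp [QEForm.rename, qev, ih]

theorem qev_sound {L : Lang} {Γ : Set (QEForm L)} {φ : QEForm L} (h : QEPrf Γ φ) :
    (∀ ψ ∈ Γ, qev ψ) → qev φ := by
  induction h with
  | hyp h => exact fun hΓ => hΓ _ h
  | botE _ ih => exact fun hΓ => (ih hΓ).elim
  | andI _ _ ih1 ih2 => exact fun hΓ => ⟨ih1 hΓ, ih2 hΓ⟩
  | andE₁ _ ih => exact fun hΓ => (ih hΓ).1
  | andE₂ _ ih => exact fun hΓ => (ih hΓ).2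
  | orI₁ _ ih => exact fun hΓ => Or.inl (ih hΓ)
  | orI₂ _ ih => exact fun hΓ => Or.inr (ih hΓ)
  | orE _ _ _ ih ih1 ih2 =>
      intro hΓ
      rcases ih hΓ with h | h
      · exact ih1 (by rintro ψ (rfl | hψ); exacts [h, hΓ _ hψ])
      · exact ih2 (by rintro ψ (rfl | hψ); exacts [h, hΓ _ hψ])
  | impI _ ih =>
      intro hΓ hφ
      exact ih (by rintro ψ (rfl | hψ); exacts [hφ, hΓ _ hψ])
  | impE _ _ ih1 ih2 => exact fun hΓ => ih1 hΓ (ih2 hΓ)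
  | allI _ ih =>
      intro hΓ
      show qev _
      exact ih (by rintro ψ ⟨χ, hχ, rfl⟩; exact (qev_rename χ _).mpr (hΓ _ hχ))
  | allE k _ ih =>
      intro hΓ
      exact (qev_rename _ _).mpr (ih hΓ)
  | exI k _ ih =>
      intro hΓ
      have h' := (qev_rename _ _).mp (ih hΓ)
      exact h'
  | exE _ _ ih1 ih2 =>
      intro hΓ
      refine (qev_rename _ Nat.succ).mp (ih2 ?_)
      rintro ψ (rfl | ⟨χ, hχ, rfl⟩)
      · exact ih1 hΓ
      · exact (qev_rename χ _).mpr (hΓ _ hχ)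
  | eqRefl i => exact fun _ => trivial
  | eqSym _ _ => exact fun _ => trivial
  | eqTrans _ _ _ _ => exact fun _ => trivial
  | relCong _ _ _ _ _ => exact fun _ => trivial

/-- The separating formula `∃x∃y ¬ x = y`. -/
def sepForm (L : Lang) : QEForm L := .ex (.ex (.imp (.eq 1 0) .bot))

theorem sepForm_not_IQCeq (L : Lang) : sepForm L ∉ IQCeq L := by
  intro h
  have := qev_sound h (by simp)
  exact (this : qev (QEForm.imp (.eq 1 0) .bot)) trivial
/-! ### `∃x∃y ¬ x = y` is derivable from Empty Set and Pairing -/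

theorem exists_distinct {T : Set SetF} (he : Axioms.emptySet ∈ T)
    (hp : Axioms.pairing ∈ T) :
    Prf T (.ex (.ex (.imp (.eq 1 0) .bot))) := by
  have h0 : Prf T (.ex (.all (.imp (.mem 0 1) .bot))) := .hyp he
  refine Prf.exE h0 ?_
  show Prf (insert (.all (.imp (.mem 0 1) .bot)) (SetF.shift '' T))
    (.ex (.ex (.imp (.eq 1 0) .bot)))
  set Γ1 : Set SetF := insert (.all (.imp (.mem 0 1) .bot)) (SetF.shift '' T) with hΓ1
  have hpair : Prf Γ1 Axioms.pairing := by
    refine .hyp (Set.mem_insert_of_mem _ ⟨Axioms.pairing, hp, ?_⟩)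
    rfl
  have h1 : Prf Γ1 (.all (.ex (.all (SetF.biimp (.mem 0 1)
      (.or (.eq 0 3) (.eq 0 2)))))) := Prf.allE 0 hpair
  have h2 : Prf Γ1 (.ex (.all (SetF.biimp (.mem 0 1)
      (.or (.eq 0 2) (.eq 0 2))))) := Prf.allE 0 h1
  refine Prf.exE h2 ?_
  show Prf (insert (.all (SetF.biimp (.mem 0 1) (.or (.eq 0 2) (.eq 0 2)))) (SetF.shift '' Γ1))
    (.ex (.ex (.imp (.eq 1 0) .bot)))
  set Γ2 : Set SetF :=
    insert (.all (SetF.biimp (.mem 0 1) (.or (.eq 0 2) (.eq 0 2)))) (SetF.shift '' Γ1) with hΓ2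
  -- var 0 = s = {e}, var 1 = e = ∅
  have hS : Prf Γ2 (.all (SetF.biimp (.mem 0 1) (.or (.eq 0 2) (.eq 0 2)))) :=
    .hyp (Set.mem_insert _ _)
  have hBi : Prf Γ2 (SetF.biimp (.mem 1 0) (.or (.eq 1 1) (.eq 1 1))) := Prf.allE 1 hS
  have hES : Prf Γ2 (.mem 1 0) := .impE (.andE₂ hBi) (.orI₁ (.eqRefl 1))
  have hEmpty : Prf Γ2 (.all (.imp (.mem 0 2) .bot)) := by
    refine .hyp (Set.mem_insert_of_mem _ ⟨.all (.imp (.mem 0 1) .bot), Set.mem_insert _ _, ?_⟩)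
    rfl
  refine Prf.exI 1 (φ := .ex (.imp (.eq 1 0) .bot)) ?_
  show Prf Γ2 (.ex (.imp (.eq 2 0) .bot))
  refine Prf.exI 0 (φ := .imp (.eq 2 0) .bot) ?_
  show Prf Γ2 (.imp (.eq 1 0) .bot)
  refine Prf.impI ?_
  set Γ3 : Set SetF := insert (.eq 1 0) Γ2 with hΓ3
  have hEq : Prf Γ3 (.eq 1 0) := .hyp (Set.mem_insert _ _)
  have hES3 : Prf Γ3 (.mem 1 0) := hES.weaken (Set.subset_insert _ _)
  have hEE : Prf Γ3 (.mem 1 1) := .eqMemR (.eqSym hEq) hES3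
  have hImp : Prf Γ3 (.imp (.mem 1 1) .bot) :=
    Prf.allE 1 (hEmpty.weaken (Set.subset_insert _ _))
  exact .impE hImp hEE

/-! ### Assembling the theorem -/

theorem IQCeq_subset_QLeq (L : Lang) (T : Set SetF) : IQCeq L ⊆ QLeq L T := by
  intro φ h σ hσ
  have := qe_sound hσ h
  rw [Set.image_empty] at this
  exact this.weaken (Set.empty_subset T)

theorem sepForm_mem_QLeq {L : Lang} {T : Set SetF} (he : Axioms.emptySet ∈ T)
    (hp : Axioms.pairing ∈ T) : sepForm L ∈ QLeq L T := by
  intro σ hσ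
  exact exists_distinct he hp

theorem IQCeq_ssubset_QLeq {L : Lang} {T : Set SetF} (he : Axioms.emptySet ∈ T)
    (hp : Axioms.pairing ∈ T) : IQCeq L ⊂ QLeq L T := by
  rw [Set.ssubset_def]
  refine ⟨IQCeq_subset_QLeq L T, fun hsub => ?_⟩
  exact sepForm_not_IQCeq L (hsub (sepForm_mem_QLeq he hp))

theorem emptySet_mem_IKP : Axioms.emptySet ∈ Axioms.IKP := by
  simp [Axioms.IKP]

theorem pairing_mem_IKP : Axioms.pairing ∈ Axioms.IKP := by
  simp [Axioms.IKP]

/-- The first-order logic with equality of each of `IKP`,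
`IKP⁺ + MP + AC`, `CZF` and `IZF` is strictly stronger than `IQC⁼`. -/
theorem equality_logic_strictly_stronger_examples (L : Lang) :
    IQCeq L ⊂ QLeq L Axioms.IKP ∧ IQCeq L ⊂ QLeq L Axioms.IKPplusMPAC ∧
    IQCeq L ⊂ QLeq L Axioms.CZF ∧ IQCeq L ⊂ QLeq L Axioms.IZF := by
  refine ⟨IQCeq_ssubset_QLeq emptySet_mem_IKP pairing_mem_IKP,
    IQCeq_ssubset_QLeq ?_ ?_, IQCeq_ssubset_QLeq ?_ ?_, IQCeq_ssubset_QLeq ?_ ?_⟩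
  · exact Or.inl (Or.inl (Or.inl emptySet_mem_IKP))
  · exact Or.inl (Or.inl (Or.inl pairing_mem_IKP))
  · simp [Axioms.CZF]
  · simp [Axioms.CZF]
  · simp [Axioms.IZF]
  · simp [Axioms.IZF]

end IKP2007
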